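/- Let Γ' = Γ ∪ {∀x φ[∃y◇ψ]} be a clean finite set of formulas, each a subformula of the ABBABE fragment, where ∃y◇ψ is a component of φ (occurring outside the scope of any modality in φ). If ⋀Γ ∧ ∀x φ[∃y◇ψ] is satisfiable in an increasing domain model, then there exists l ≤ 2^{|Γ'|} such that ⋀Γ ∧ ∃y1∃y1'∃y2∃y2'…∃yl∃yl' ∀x φ[ȳ◇ψ] is satisfiable in an increasing domain model, where y1,y1',…,yl,yl' are fresh variables and φ[ȳ◇ψ] is φ with the component ∃y◇ψ replaced by the disjunction ⋁_{i≤l}( ◇ψ[yi/y] ∨ ◇ψ[yi'/y] ). -/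

import Mathlib

set_option maxHeartbeats 1000000

/-! ## Syntax of first-order modal logic (FOML)

Predicate symbols and variables are represented by natural numbers; an atom
`atom p args` applies the predicate symbol `p` to the list of variables `args`
(the arity of `p` in this occurrence is the length of `args`). -/
inductive Formula : Type where
  | atom (p : ℕ) (args : List ℕ)
  | neg  (φ : Formula)
  | and  (φ ψ : Formula)
  | or   (φ ψ : Formula)
  | box  (φ : Formula)
  | dia  (φ : Formula)
  | ex   (x : ℕ) (φ : Formula)
  | all  (x : ℕ) (φ : Formula)
deriving DecidableEq

namespace Formula

def imp (φ ψ : Formula) : Formula := .or φ.neg ψ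
def biimp (φ ψ : Formula) : Formula := .and (imp φ ψ) (imp ψ φ)
/-- a fixed tautology `⊤` -/
def top : Formula := .or (.atom 0 []) (.neg (.atom 0 []))
/-- a fixed contradiction `⊥` -/
def bot : Formula := .and (.atom 0 []) (.neg (.atom 0 []))

end Formula

def bigAnd (l : List Formula) : Formula := l.foldr Formula.and Formula.top
def bigOr  (l : List Formula) : Formula := l.foldr Formula.or Formula.bot

/-! ## Semantics: Kripke structures with world-relative domains -/

structure Model where
  W : Type
  D : Type
  R : W → W → Prop
  dom : W → Set D
  ρ : W → ℕ → Set (List D)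

/-- `M` is an increasing domain model: nonempty countable set of worlds, nonempty
countable domain, nonempty local domains that increase along the accessibility
relation, and interpretations of predicates at a world take values in the local
domain of that world. -/
def Model.Increasing (M : Model) : Prop :=
  Nonempty M.W ∧ Nonempty M.D ∧ Countable M.W ∧ Countable M.D ∧
    (∀ w, (M.dom w).Nonempty) ∧
    (∀ w v, M.R w v → M.dom w ⊆ M.dom v) ∧
    (∀ w p l, l ∈ M.ρ w p → ∀ d ∈ l, d ∈ M.dom w)

def Model.sat (M : Model) : M.W → (ℕ → M.D) → Formula → Prop
  | w, σ, .atom p args => args.map σ ∈ M.ρ w p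
  | w, σ, .neg φ => ¬ M.sat w σ φ
  | w, σ, .and φ ψ => M.sat w σ φ ∧ M.sat w σ ψ
  | w, σ, .or φ ψ => M.sat w σ φ ∨ M.sat w σ ψ
  | w, σ, .box φ => ∀ v, M.R w v → M.sat v σ φ
  | w, σ, .dia φ => ∃ v, M.R w v ∧ M.sat v σ φ
  | w, σ, .ex x φ => ∃ d ∈ M.dom w, M.sat w (Function.update σ x d) φ
  | w, σ, .all x φ => ∀ d ∈ M.dom w, M.sat w (Function.update σ x d) φ

/-- the assignment `σ` is relevant at the world `w` -/
def Model.relevant (M : Model) (w : M.W) (σ : ℕ → M.D) : Prop := ∀ x, σ x ∈ M.dom w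

/-- satisfiability over increasing domain models -/
def Satisfiable (φ : Formula) : Prop :=
  ∃ (M : Model), M.Increasing ∧ ∃ (w : M.W) (σ : ℕ → M.D), M.relevant w σ ∧ M.sat w σ φ
/-! ## Free and bound variables, cleanliness, substitution, α-equivalence -/

namespace Formula

def fv : Formula → Finset ℕ
  | .atom _ args => args.toFinset
  | .neg φ => φ.fv
  | .and φ ψ => φ.fv ∪ ψ.fv
  | .or φ ψ => φ.fv ∪ ψ.fv
  | .box φ => φ.fv
  | .dia φ => φ.fv
  | .ex x φ => φ.fv.erase x
  | .all x φ => φ.fv.erase x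

def bv : Formula → Finset ℕ
  | .atom _ _ => ∅
  | .neg φ => φ.bv
  | .and φ ψ => φ.bv ∪ ψ.bv
  | .or φ ψ => φ.bv ∪ ψ.bv
  | .box φ => φ.bv
  | .dia φ => φ.bv
  | .ex x φ => insert x φ.bv
  | .all x φ => insert x φ.bv

/-- every use of a quantifier in the formula quantifies a distinct variable -/
def uniqueBinders : Formula → Prop
  | .atom _ _ => True
  | .neg φ => φ.uniqueBinders
  | .and φ ψ => φ.uniqueBinders ∧ ψ.uniqueBinders ∧ Disjoint φ.bv ψ.bv
  | .or φ ψ => φ.uniqueBinders ∧ ψ.uniqueBinders ∧ Disjoint φ.bv ψ.bv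
  | .box φ => φ.uniqueBinders
  | .dia φ => φ.uniqueBinders
  | .ex x φ => φ.uniqueBinders ∧ x ∉ φ.bv
  | .all x φ => φ.uniqueBinders ∧ x ∉ φ.bv

/-- a formula is clean if no variable occurs both bound and free in it and
every use of a quantifier quantifies a distinct variable -/
def Clean (φ : Formula) : Prop := φ.uniqueBinders ∧ Disjoint φ.fv φ.bv

/-- `φ.subst y z` is `φ[z/y]`: replace every free occurrence of `y` by `z` -/
def subst (y z : ℕ) : Formula → Formula
  | .atom p args => .atom p (args.map fun v => if v = y then z else v)
  | .neg φ => .neg (φ.subst y z)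
  | .and φ ψ => .and (φ.subst y z) (ψ.subst y z)
  | .or φ ψ => .or (φ.subst y z) (ψ.subst y z)
  | .box φ => .box (φ.subst y z)
  | .dia φ => .dia (φ.subst y z)
  | .ex x φ => if x = y then .ex x φ else .ex x (φ.subst y z)
  | .all x φ => if x = y then .all x φ else .all x (φ.subst y z)

def isLiteralB : Formula → Bool
  | .atom _ _ => true
  | .neg (.atom _ _) => true
  | _ => false

/-- a module is a literal, a `□`-formula, or a `◇`-formula -/
def isModuleB : Formula → Bool
  | .box _ => true
  | .dia _ => true
  | φ => φ.isLiteralB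

/-- the component set `C(φ)` of a formula -/
def comps : Formula → Finset Formula
  | .and φ ψ => φ.comps ∪ ψ.comps
  | .or φ ψ => φ.comps ∪ ψ.comps
  | .ex x φ => insert (.ex x φ) φ.comps
  | .all x φ => insert (.all x φ) φ.comps
  | φ => {φ}

end Formula

/-- α-equivalence (renaming of bound variables) -/
inductive AlphaEq : Formula → Formula → Prop where
  | atom (p : ℕ) (args : List ℕ) : AlphaEq (.atom p args) (.atom p args)
  | neg {φ φ'} : AlphaEq φ φ' → AlphaEq (.neg φ) (.neg φ')
  | and {φ φ' ψ ψ'} : AlphaEq φ φ' → AlphaEq ψ ψ' → AlphaEq (.and φ ψ) (.and φ' ψ')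
  | or {φ φ' ψ ψ'} : AlphaEq φ φ' → AlphaEq ψ ψ' → AlphaEq (.or φ ψ) (.or φ' ψ')
  | box {φ φ'} : AlphaEq φ φ' → AlphaEq (.box φ) (.box φ')
  | dia {φ φ'} : AlphaEq φ φ' → AlphaEq (.dia φ) (.dia φ')
  | ex {x x' : ℕ} {φ φ'}
      (h : ∀ z, z ∉ φ.bv ∪ φ'.bv → AlphaEq (φ.subst x z) (φ'.subst x' z)) :
      AlphaEq (.ex x φ) (.ex x' φ')
  | all {x x' : ℕ} {φ φ'}
      (h : ∀ z, z ∉ φ.bv ∪ φ'.bv → AlphaEq (φ.subst x z) (φ'.subst x' z)) :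
      AlphaEq (.all x φ) (.all x' φ')

/-- a finite set of formulas is clean if the conjunction of its members is clean -/
def CleanSet (Γ : Finset Formula) : Prop :=
  (∀ φ ∈ Γ, φ.uniqueBinders) ∧
    Disjoint (Γ.sup Formula.fv) (Γ.sup Formula.bv) ∧
    (∀ φ ∈ Γ, ∀ ψ ∈ Γ, φ ≠ ψ → Disjoint φ.bv ψ.bv)

/-- `Γ` is Existential-safe: every component of every formula of `Γ` is a module
or universally quantified -/
def ExSafe (Γ : Finset Formula) : Prop :=
  ∀ φ ∈ Γ, ∀ β ∈ φ.comps, β.isModuleB = true ∨ ∃ (x : ℕ) (γ : Formula), β = .all x γ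
/-- The `ABBABE` fragment (in negation normal form): literals, `∧`, `∨`, `□α`,
`◇α`, and the bundles `∀x□α`, `□∀xα`, `□∃xα` together with their duals
`∃x◇α`, `◇∃xα`, `◇∀xα`. -/
inductive ABBABE : Formula → Prop where
  | atom (p : ℕ) (args : List ℕ) : ABBABE (.atom p args)
  | natom (p : ℕ) (args : List ℕ) : ABBABE (.neg (.atom p args))
  | and {φ ψ : Formula} : ABBABE φ → ABBABE ψ → ABBABE (.and φ ψ)
  | or {φ ψ : Formula} : ABBABE φ → ABBABE ψ → ABBABE (.or φ ψ)
  | box {φ : Formula} : ABBABE φ → ABBABE (.box φ)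
  | dia {φ : Formula} : ABBABE φ → ABBABE (.dia φ)
  | allBox {x : ℕ} {φ : Formula} : ABBABE φ → ABBABE (.all x (.box φ))
  | exDia {x : ℕ} {φ : Formula} : ABBABE φ → ABBABE (.ex x (.dia φ))
  | boxAll {x : ℕ} {φ : Formula} : ABBABE φ → ABBABE (.box (.all x φ))
  | diaEx {x : ℕ} {φ : Formula} : ABBABE φ → ABBABE (.dia (.ex x φ))
  | boxEx {x : ℕ} {φ : Formula} : ABBABE φ → ABBABE (.box (.ex x φ))
  | diaAll {x : ℕ} {φ : Formula} : ABBABE φ → ABBABE (.dia (.all x φ))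

/-- `Subf φ ψ` : `φ` is a subformula of `ψ` -/
inductive Subf : Formula → Formula → Prop where
  | refl (φ : Formula) : Subf φ φ
  | neg {φ ψ} : Subf φ ψ → Subf φ (.neg ψ)
  | andL {φ ψ χ} : Subf φ ψ → Subf φ (.and ψ χ)
  | andR {φ ψ χ} : Subf φ χ → Subf φ (.and ψ χ)
  | orL {φ ψ χ} : Subf φ ψ → Subf φ (.or ψ χ)
  | orR {φ ψ χ} : Subf φ χ → Subf φ (.or ψ χ)
  | box {φ ψ} : Subf φ ψ → Subf φ (.box ψ)
  | dia {φ ψ} : Subf φ ψ → Subf φ (.dia ψ)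
  | ex {x : ℕ} {φ ψ} : Subf φ ψ → Subf φ (.ex x ψ)
  | all {x : ℕ} {φ ψ} : Subf φ ψ → Subf φ (.all x ψ)

/-- `φ` is a subformula of the `ABBABE` fragment: it is a subformula of some
formula of the fragment -/
def IsSubABBABE (φ : Formula) : Prop := ∃ ψ, ABBABE ψ ∧ Subf φ ψ
/-- a finite set of formulas is (simultaneously) satisfiable in an increasing
domain model with a relevant assignment -/
def SatSet (Γ : Finset Formula) : Prop :=
  ∃ (M : Model), M.Increasing ∧ ∃ (w : M.W) (σ : ℕ → M.D),
    M.relevant w σ ∧ ∀ φ ∈ Γ, M.sat w σ φ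

/-- the size (number of symbols) of a formula -/
def Formula.size : Formula → ℕ
  | .atom _ args => 1 + args.length
  | .neg φ => φ.size + 1
  | .and φ ψ => φ.size + ψ.size + 1
  | .or φ ψ => φ.size + ψ.size + 1
  | .box φ => φ.size + 1
  | .dia φ => φ.size + 1
  | .ex _ φ => φ.size + 2
  | .all _ φ => φ.size + 2

/-- `replComp t r φ` is `φ[r/t]`: the result of replacing the component `t` of
`φ` by `r` (descending only through boolean connectives and quantifiers) -/
def replComp (t r : Formula) (φ : Formula) : Formula :=
  if φ = t then r
  else
    match φ with
    | .and φ₁ φ₂ => .and (replComp t r φ₁) (replComp t r φ₂)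
    | .or φ₁ φ₂ => .or (replComp t r φ₁) (replComp t r φ₂)
    | .ex x φ₁ => .ex x (replComp t r φ₁)
    | .all x φ₁ => .all x (replComp t r φ₁)
    | φ' => φ'

/-- the existential prefix `∃y1∃y1'∃y2∃y2'…∃yl∃yl'` given by a list of pairs -/
def exChain (ys : List (ℕ × ℕ)) (φ : Formula) : Formula :=
  ys.foldr (fun p acc => .ex p.1 (.ex p.2 acc)) φ

/-- the disjunction `⋁_{i≤l} ( ◇ψ[yi/y] ∨ ◇ψ[yi'/y] )` -/
def mkWitDisj (y : ℕ) (ψ : Formula) (ys : List (ℕ × ℕ)) : Formula :=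
  bigOr (ys.map fun p => .or (.dia (ψ.subst y p.1)) (.dia (ψ.subst y p.2)))

/-!
Triplicate every domain element; the copy `0` carries the assignment `σ`. The type of an element
`d` of the root `w` is the set of pairs `(z, β)`, with `β` a component of the body of a quantifier
`∀z`/`∃z` heading a formula of `Γ'`, such that `β` holds at `w` under `σ[z ↦ d]`; there are at
most `2^{|Γ'|}` types. Pick a representative `c` of every realized type and let the fresh pair
`yᵢ, yᵢ'` name its copies `(c, 1)` and `(c, 2)`.

The new model has a new root, a copy of `w`, whose successors are those of `w` together with, for
any two elements of equal type in the copies `1, 2`, copies of those successors with the two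
elements swapped. At the root a formula of the fragment speaks about at most one quantified
variable `z`, and it reaches the swapped successors only through `□`-modules and `∀z□`-bundles,
which the types record; so equal types keep `Γ'` true at the new root. If `∃y◇ψ` holds with
`x ↦ ζ` and witness `e`, swapping a copy of `e` with the copy of its representative named by `yᵢ`
or `yᵢ'` (whichever is not `ζ`) makes `◇ψ[yᵢ/y]` or `◇ψ[yᵢ'/y]` true.
-/

open Function Set

namespace Formula

def vars (φ : Formula) : Finset ℕ := φ.fv ∪ φ.bv

lemma vars_subset_of_mem_comps {φ β : Formula} (h : β ∈ φ.comps) : β.vars ⊆ φ.vars := by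
  induction φ with
  | and φ₁ φ₂ ih₁ ih₂ | or φ₁ φ₂ ih₁ ih₂ =>
    simp only [comps, Finset.mem_union] at h
    rcases h with h | h
    · exact (ih₁ h).trans (by intro z; simp [vars, fv, bv]; tauto)
    · exact (ih₂ h).trans (by intro z; simp [vars, fv, bv]; tauto)
  | ex z φ ih | all z φ ih =>
    simp only [comps, Finset.mem_insert] at h
    rcases h with rfl | h
    · rfl
    · refine (ih h).trans ?_
      intro v
      by_cases hv : v = z <;> simp [vars, fv, bv, hv]
  | _ => simp only [comps, Finset.mem_singleton] at h; rw [h]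

lemma vars_ex (y : ℕ) (ψ : Formula) : (ex y ψ).vars = insert y ψ.vars := by
  ext v; by_cases hv : v = y <;> simp [vars, fv, bv, hv]

lemma vars_all (y : ℕ) (ψ : Formula) : (all y ψ).vars = insert y ψ.vars := by
  ext v; by_cases hv : v = y <;> simp [vars, fv, bv, hv]

lemma card_comps_le_size (φ : Formula) : φ.comps.card ≤ φ.size := by
  induction φ with
  | and φ₁ φ₂ ih₁ ih₂ | or φ₁ φ₂ ih₁ ih₂ =>
    have := Finset.card_union_le φ₁.comps φ₂.comps
    simp only [comps, size]; omega
  | ex z φ ih | all z φ ih =>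
    simp only [comps, size]
    exact (Finset.card_insert_le _ _).trans (by omega)
  | _ => simp [comps, size]

def scopedComps : Formula → Finset (ℕ × Formula)
  | all z b | ex z b => b.comps.image (z, ·)
  | _ => ∅

lemma mem_scopedComps_all {z : ℕ} {b β : Formula} (h : β ∈ b.comps) :
    (z, β) ∈ (all z b).scopedComps :=
  Finset.mem_image_of_mem _ h

lemma mem_scopedComps_ex {z : ℕ} {b β : Formula} (h : β ∈ b.comps) :
    (z, β) ∈ (ex z b).scopedComps :=
  Finset.mem_image_of_mem _ h

lemma card_scopedComps_le (φ : Formula) : φ.scopedComps.card ≤ φ.size := by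
  cases φ with
  | all z b | ex z b =>
    have := b.card_comps_le_size
    have := (b.comps.card_image_le (f := (z, ·)))
    simp only [scopedComps, size]; omega
  | _ => simp [scopedComps]

lemma card_biUnion_scopedComps_le (Γ : Finset Formula) :
    (Γ.biUnion scopedComps).card ≤ Γ.sum size :=
  Finset.card_biUnion_le.trans (Finset.sum_le_sum fun φ _ => φ.card_scopedComps_le)

end Formula

lemma replComp_self (t φ : Formula) : replComp t t φ = φ := by
  induction φ <;> unfold replComp <;> split_ifs with h <;> first | exact h.symm | simp only [*]

/-- the subformulas of the fragment: its formulas, possibly under one quantifier -/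
def QuantABBABE (γ : Formula) : Prop :=
  ABBABE γ ∨ ∃ z b, (γ = .all z b ∨ γ = .ex z b) ∧ ABBABE b

lemma QuantABBABE.of_subf {γ χ : Formula} (hsub : Subf γ χ) (h : QuantABBABE χ) :
    QuantABBABE γ := by
  induction hsub with
  | refl => exact h
  | _ _ ih =>
    apply ih
    rcases h with h | ⟨z, b, h | h, hb⟩
    all_goals cases h
    all_goals first
      | exact Or.inl (by assumption)
      | exact Or.inl (by constructor; assumption)
      | exact Or.inl (.atom _ _)
      | exact Or.inr ⟨_, _, Or.inl rfl, by assumption⟩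
      | exact Or.inr ⟨_, _, Or.inr rfl, by assumption⟩

lemma IsSubABBABE.quantABBABE {γ : Formula} (h : IsSubABBABE γ) : QuantABBABE γ :=
  let ⟨_, hχ, hsub⟩ := h
  .of_subf hsub (.inl hχ)

lemma QuantABBABE.abbabe_of_all {x y : ℕ} {φ χ : Formula} (h : QuantABBABE (.all x φ))
    (hcomp : .ex y χ ∈ φ.comps) : ABBABE φ := by
  rcases h with h | ⟨z, b, h | h, hb⟩
  · cases h
    simp [Formula.comps] at hcomp
  · cases h
    exact hb
  · cases h

namespace Model

section

variable (M : Model)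

lemma sat_congr {θ : Formula} {w : M.W} {τ τ' : ℕ → M.D} (h : ∀ z ∈ θ.fv, τ z = τ' z) :
    M.sat w τ θ ↔ M.sat w τ' θ := by
  induction θ generalizing w τ τ' with
  | atom p args =>
    simp only [sat, List.map_congr_left (fun a ha => h a (List.mem_toFinset.mpr ha))]
  | neg φ ih => exact not_congr (ih h)
  | and φ ψ ih₁ ih₂ | or φ ψ ih₁ ih₂ =>
    simp only [Formula.fv, Finset.mem_union] at h
    simp only [sat, ih₁ fun z hz => h z (.inl hz), ih₂ fun z hz => h z (.inr hz)]
  | box φ ih => exact forall₂_congr fun v _ => ih h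
  | dia φ ih => exact exists_congr fun v => and_congr_right fun _ => ih h
  | ex z φ ih | all z φ ih =>
    have h' : ∀ d, ∀ v ∈ φ.fv, update τ z d v = update τ' z d v := fun d v hv => by
      by_cases hvz : v = z
      · simp [hvz]
      · simp [hvz, h v (Finset.mem_erase.mpr ⟨hvz, hv⟩)]
    simp only [sat, ih (h' _)]

lemma sat_subst {ψ : Formula} {w : M.W} {τ : ℕ → M.D} {y u : ℕ} (hu : u ∉ ψ.bv) :
    M.sat w τ (ψ.subst y u) ↔ M.sat w (update τ y (τ u)) ψ := by
  induction ψ generalizing w τ with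
  | atom p args =>
    simp only [Formula.subst, sat, List.map_map]
    congr! 2
    ext v; by_cases hv : v = y <;> simp [hv]
  | neg φ ih => exact not_congr (ih hu)
  | and φ ψ ih₁ ih₂ | or φ ψ ih₁ ih₂ =>
    simp only [Formula.bv, Finset.mem_union, not_or] at hu
    simp only [Formula.subst, sat, ih₁ hu.1, ih₂ hu.2]
  | box φ ih => exact forall₂_congr fun v _ => ih hu
  | dia φ ih => exact exists_congr fun v => and_congr_right fun _ => ih hu
  | ex z φ ih | all z φ ih =>
    simp only [Formula.bv, Finset.mem_insert, not_or] at hu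
    by_cases hzy : z = y
    · simp only [Formula.subst, if_pos hzy]
      exact M.sat_congr fun v hv => by
        rw [update_of_ne (hzy ▸ (Finset.ne_of_mem_erase hv))]
    · simp only [Formula.subst, if_neg hzy, sat, ih hu.2, update_of_ne hu.1,
        update_comm hzy]

lemma sat_bigOr {w : M.W} {τ : ℕ → M.D} {l : List Formula} :
    M.sat w τ (bigOr l) ↔ ∃ α ∈ l, M.sat w τ α := by
  induction l with
  | nil => simp [bigOr, Formula.bot, sat]
  | cons α l ih => simp_all [bigOr, sat]

end

lemma sat_iff_of_relabel (N M : Model) (S : N.W → Prop) (F : N.W → M.W) (g : N.W → N.D → M.D)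
    (hS : ∀ u u', S u → N.R u u' → S u')
    (hsurj : ∀ u, S u → Surjective (g u))
    (hdom : ∀ u, S u → ∀ d, d ∈ N.dom u ↔ g u d ∈ M.dom (F u))
    (hρ : ∀ u, S u → ∀ p l, l ∈ N.ρ u p ↔ l.map (g u) ∈ M.ρ (F u) p)
    (hforth : ∀ u u', S u → N.R u u' → M.R (F u) (F u') ∧ g u' = g u)
    (hback : ∀ u v, S u → M.R (F u) v → ∃ u', N.R u u' ∧ F u' = v ∧ g u' = g u)
    (θ : Formula) {u : N.W} (hu : S u) (τ : ℕ → N.D) :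
    N.sat u τ θ ↔ M.sat (F u) (g u ∘ τ) θ := by
  induction θ generalizing u τ with
  | atom p args => simp only [sat, hρ u hu, List.map_map]
  | neg φ ih => exact not_congr (ih hu τ)
  | and φ ψ ih₁ ih₂ | or φ ψ ih₁ ih₂ => simp only [sat, ih₁ hu τ, ih₂ hu τ]
  | box φ ih =>
    constructor
    · intro h v hv
      obtain ⟨u', hR, rfl, hg⟩ := hback u v hu hv
      simpa only [ih (hS u u' hu hR), hg] using h u' hR
    · intro h u' hR
      obtain ⟨hR', hg⟩ := hforth u u' hu hR
      simpa only [ih (hS u u' hu hR), hg] using h _ hR'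
  | dia φ ih =>
    constructor
    · rintro ⟨u', hR, h⟩
      obtain ⟨hR', hg⟩ := hforth u u' hu hR
      exact ⟨_, hR', by simpa only [ih (hS u u' hu hR), hg] using h⟩
    · rintro ⟨v, hv, h⟩
      obtain ⟨u', hR, rfl, hg⟩ := hback u v hu hv
      exact ⟨u', hR, by simpa only [ih (hS u u' hu hR), hg] using h⟩
  | ex z φ ih =>
    constructor
    · rintro ⟨d, hd, h⟩
      exact ⟨g u d, (hdom u hu d).mp hd, by simpa only [ih hu, comp_update] using h⟩
    · rintro ⟨e, he, h⟩
      obtain ⟨d, rfl⟩ := hsurj u hu e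
      exact ⟨d, (hdom u hu d).mpr he, by simpa only [ih hu, comp_update] using h⟩
  | all z φ ih =>
    constructor
    · intro h e he
      obtain ⟨d, rfl⟩ := hsurj u hu e
      simpa only [ih hu, comp_update] using h d ((hdom u hu d).mpr he)
    · intro h d hd
      simpa only [ih hu, comp_update] using h _ ((hdom u hu d).mp hd)

abbrev copies (M : Model) (ι : Type) : Model where
  W := M.W
  D := M.D × ι
  R := M.R
  dom v := Prod.fst ⁻¹' M.dom v
  ρ v p := {l | l.map Prod.fst ∈ M.ρ v p}

lemma sat_copies (M : Model) {ι : Type} [Nonempty ι] (θ : Formula) (v : M.W)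
    (τ : ℕ → M.D × ι) : (M.copies ι).sat v τ θ ↔ M.sat v (Prod.fst ∘ τ) θ :=
  sat_iff_of_relabel (M.copies ι) M (fun _ => True) id (fun _ => Prod.fst)
    (fun _ _ _ _ => trivial) (fun _ _ => Prod.fst_surjective) (fun _ _ _ => Iff.rfl)
    (fun _ _ _ _ => Iff.rfl) (fun _ _ _ h => ⟨h, rfl⟩)
    (fun _ v _ h => ⟨v, h, rfl, rfl⟩) θ trivial τ

lemma Increasing.copies {M : Model} (hM : M.Increasing) (ι : Type) [Nonempty ι] [Countable ι] :
    (M.copies ι).Increasing := by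
  obtain ⟨hW, ⟨d⟩, _, _, hne, hmono, hρ⟩ := hM
  refine ⟨hW, ⟨(d, Classical.arbitrary ι)⟩, ‹_›, inferInstanceAs (Countable (M.D × ι)),
    fun v => ?_, fun v v' h => preimage_mono (hmono v v' h), fun v p l hl e he => ?_⟩
  · obtain ⟨d, hd⟩ := hne v
    exact ⟨(d, Classical.arbitrary ι), hd⟩
  · exact hρ v p _ hl e.1 (List.mem_map_of_mem he)

/-- a new root `none`, a copy of `w`, whose successors are the worlds `some (v, i)` with `K.R w v`;
`some (v, i)` is a copy of `v` with its domain elements renamed by `(π i)⁻¹` -/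
abbrev rootExt (K : Model) (w : K.W) {ι : Type} (π : ι → Equiv.Perm K.D) : Model where
  W := Option (K.W × ι)
  D := K.D
  R
    | none, some (v, _) => K.R w v
    | some (v, i), some (v', i') => K.R v v' ∧ i' = i
    | _, none => False
  dom
    | none => K.dom w
    | some (v, i) => π i ⁻¹' K.dom v
  ρ
    | none => K.ρ w
    | some (v, i) => fun p => {l | l.map (π i) ∈ K.ρ v p}

section rootExt

variable (K : Model) (w : K.W) {ι : Type} (π : ι → Equiv.Perm K.D)

lemma sat_rootExt_some (θ : Formula) (v : K.W) (i : ι) (τ : ℕ → K.D) :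
    (K.rootExt w π).sat (some (v, i)) τ θ ↔ K.sat v (π i ∘ τ) θ :=
  sat_iff_of_relabel (K.rootExt w π) K (fun u => u ≠ none) (fun u => u.elim w Prod.fst)
    (fun u => u.elim id fun p => π p.2)
    (by rintro (_ | _) (_ | _) hu h <;>
          first | exact absurd rfl hu | exact h.elim | exact Option.some_ne_none _)
    (by rintro (_ | ⟨v, i⟩) hu
        exacts [absurd rfl hu, (π i).surjective])
    (by rintro (_ | _) hu d
        exacts [absurd rfl hu, Iff.rfl])
    (by rintro (_ | _) hu p l
        exacts [absurd rfl hu, Iff.rfl])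
    (by rintro (_ | ⟨v, i⟩) (_ | ⟨v', i'⟩) hu h
        · exact absurd rfl hu
        · exact absurd rfl hu
        · exact h.elim
        · obtain ⟨h, rfl⟩ := h
          exact ⟨h, rfl⟩)
    (by rintro (_ | ⟨v, i⟩) v' hu h
        · exact absurd rfl hu
        · exact ⟨some (v', i), ⟨h, rfl⟩, rfl, rfl⟩)
    θ (Option.some_ne_none _) τ

lemma sat_rootExt_none_box (β : Formula) (τ : ℕ → K.D) :
    (K.rootExt w π).sat none τ (.box β) ↔ ∀ i, K.sat w (π i ∘ τ) (.box β) := by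
  refine ⟨fun h i v hv => (sat_rootExt_some K w π β v i τ).mp (h (some (v, i)) hv), ?_⟩
  rintro h (_ | ⟨v, i⟩) hv
  exacts [hv.elim, (sat_rootExt_some K w π β v i τ).mpr (h i v hv)]

lemma sat_rootExt_none_dia (β : Formula) (τ : ℕ → K.D) :
    (K.rootExt w π).sat none τ (.dia β) ↔ ∃ i, K.sat w (π i ∘ τ) (.dia β) := by
  constructor
  · rintro ⟨_ | ⟨v, i⟩, hv, h⟩
    exacts [hv.elim, ⟨i, v, hv, (sat_rootExt_some K w π β v i τ).mp h⟩]
  · rintro ⟨i, v, hv, h⟩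
    exact ⟨some (v, i), hv, (sat_rootExt_some K w π β v i τ).mpr h⟩

variable {K w π}

lemma sat_rootExt_none_dia_of_sat (hid : ∃ i, π i = 1) {β : Formula} {τ : ℕ → K.D}
    (h : K.sat w τ (.dia β)) : (K.rootExt w π).sat none τ (.dia β) := by
  obtain ⟨i, hi⟩ := hid
  exact (sat_rootExt_none_dia K w π β τ).mpr ⟨i, by simpa [hi] using h⟩

lemma sat_rootExt_none_exDia_of_sat (hid : ∃ i, π i = 1) {y : ℕ} {ψ : Formula} {τ : ℕ → K.D}
    (h : K.sat w τ (.ex y (.dia ψ))) :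
    (K.rootExt w π).sat none τ (.ex y (.dia ψ)) :=
  let ⟨d, hd, h⟩ := h
  ⟨d, hd, sat_rootExt_none_dia_of_sat hid h⟩

lemma sat_rootExt_none_replComp (hπ : ∀ i, MapsTo (π i) (K.dom w) (K.dom w))
    (hid : ∃ i, π i = 1) {y : ℕ} {ψ r : Formula} {τ : ℕ → K.D}
    (hleaf : K.sat w τ (.ex y (.dia ψ)) → (K.rootExt w π).sat none τ r)
    {θ : Formula} (hθ : ABBABE θ)
    (hinv : ∀ i, ∀ β ∈ θ.comps, K.sat w τ β → K.sat w (π i ∘ τ) β)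
    (h : K.sat w τ θ) : (K.rootExt w π).sat none τ (replComp (.ex y (.dia ψ)) r θ) := by
  induction hθ with
  | atom | natom =>
    simp only [replComp, reduceCtorEq, if_false]
    exact h
  | and _ _ ih₁ ih₂ =>
    simp only [Formula.comps, Finset.mem_union] at hinv
    simp only [replComp, reduceCtorEq, if_false]
    exact ⟨ih₁ (fun i β hβ => hinv i β (.inl hβ)) h.1, ih₂ (fun i β hβ => hinv i β (.inr hβ)) h.2⟩
  | or _ _ ih₁ ih₂ =>
    simp only [Formula.comps, Finset.mem_union] at hinv
    simp only [replComp, reduceCtorEq, if_false]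
    exact h.imp (ih₁ fun i β hβ => hinv i β (.inl hβ)) (ih₂ fun i β hβ => hinv i β (.inr hβ))
  | box | boxAll | boxEx =>
    simp only [replComp, reduceCtorEq, if_false]
    exact (sat_rootExt_none_box K w π _ τ).mpr fun i => hinv i _ (by simp [Formula.comps]) h
  | dia | diaEx | diaAll =>
    simp only [replComp, reduceCtorEq, if_false]
    exact sat_rootExt_none_dia_of_sat hid h
  | allBox =>
    simp only [replComp, reduceCtorEq, if_false]
    intro d hd
    refine (sat_rootExt_none_box K w π _ _).mpr fun i => ?_
    rw [comp_update]
    exact hinv i _ (by simp [Formula.comps]) h _ (hπ i hd)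
  | @exDia z β _ _ =>
    by_cases ht : Formula.ex z (.dia β) = .ex y (.dia ψ)
    · rw [ht, replComp, if_pos rfl]
      exact hleaf (ht ▸ h)
    · simp only [replComp, if_neg ht, reduceCtorEq, if_false]
      obtain ⟨d, hd, h⟩ := h
      exact ⟨d, hd, sat_rootExt_none_dia_of_sat hid h⟩

lemma sat_rootExt_none_of_abbabe (hπ : ∀ i, MapsTo (π i) (K.dom w) (K.dom w))
    (hid : ∃ i, π i = 1) {τ : ℕ → K.D}
    {θ : Formula} (hθ : ABBABE θ) (hinv : ∀ i, ∀ β ∈ θ.comps, K.sat w τ β → K.sat w (π i ∘ τ) β)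
    (h : K.sat w τ θ) : (K.rootExt w π).sat none τ θ := by
  -- `replComp t t θ = θ` for every `t`
  simpa only [replComp_self] using sat_rootExt_none_replComp hπ hid (y := 0) (ψ := θ)
    (sat_rootExt_none_exDia_of_sat hid) hθ hinv h

end rootExt

lemma Increasing.rootExt {K : Model} (hK : K.Increasing) (w : K.W) {ι : Type} [Countable ι]
    (π : ι → Equiv.Perm K.D) (hπ : ∀ i, MapsTo (π i) (K.dom w) (K.dom w)) :
    (K.rootExt w π).Increasing := by
  obtain ⟨-, hD, _, _, hne, hmono, hρ⟩ := hK
  refine ⟨⟨none⟩, hD, inferInstanceAs (Countable (Option (K.W × ι))), ‹Countable K.D›,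
    ?_, ?_, ?_⟩
  · rintro (_ | ⟨v, i⟩)
    · exact hne w
    · obtain ⟨d, hd⟩ := hne v
      exact ⟨(π i).symm d, show π i ((π i).symm d) ∈ K.dom v by simpa using hd⟩
  · rintro (_ | ⟨v, i⟩) (_ | ⟨v', i'⟩) h
    · exact h.elim
    · exact fun d hd => hmono w v' h (hπ i' hd)
    · exact h.elim
    · obtain ⟨h, rfl⟩ := h
      exact preimage_mono (hmono v v' h)
  · rintro (_ | ⟨v, i⟩) p l hl d hd
    · exact hρ w p l hl d hd
    · exact hρ v p _ hl _ (List.mem_map_of_mem hd)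

end Model

def updatePairs {D : Type} (σ : ℕ → D) : List ((ℕ × ℕ) × (D × D)) → ℕ → D
  | [] => σ
  | ((a, b), (d, e)) :: l => updatePairs (update (update σ a d) b e) l

lemma updatePairs_of_not_mem {D : Type} {z : ℕ} {l : List ((ℕ × ℕ) × (D × D))}
    (hz : ∀ q ∈ l, z ≠ q.1.1 ∧ z ≠ q.1.2) (σ : ℕ → D) : updatePairs σ l z = σ z := by
  induction l generalizing σ with
  | nil => rfl
  | cons q l ih =>
    obtain ⟨⟨a, b⟩, d, e⟩ := q
    obtain ⟨ha, hb⟩ := hz _ List.mem_cons_self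
    rw [updatePairs, ih (fun q hq => hz q (List.mem_cons_of_mem _ hq)), update_of_ne hb,
      update_of_ne ha]

lemma updatePairs_of_mem {D : Type} {l : List ((ℕ × ℕ) × (D × D))}
    (hnd : ((l.map Prod.fst).map Prod.fst ++ (l.map Prod.fst).map Prod.snd).Nodup)
    (σ : ℕ → D) {q : (ℕ × ℕ) × (D × D)} (hq : q ∈ l) :
    updatePairs σ l q.1.1 = q.2.1 ∧ updatePairs σ l q.1.2 = q.2.2 := by
  induction l generalizing σ with
  | nil => cases hq
  | cons q' l ih =>
    obtain ⟨⟨a, b⟩, d, e⟩ := q'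
    simp only [List.map_cons, List.cons_append, List.nodup_cons, List.nodup_middle,
      List.mem_append, List.mem_cons, not_or] at hnd
    obtain ⟨⟨ha₁, hab, ha₂⟩, ⟨hb₁, hb₂⟩, hnd⟩ := hnd
    have hvars : ∀ q ∈ l, q.1.1 ∈ (l.map Prod.fst).map Prod.fst ∧
        q.1.2 ∈ (l.map Prod.fst).map Prod.snd := fun q hq =>
      ⟨List.mem_map_of_mem (List.mem_map_of_mem hq), List.mem_map_of_mem (List.mem_map_of_mem hq)⟩
    rcases List.mem_cons.mp hq with rfl | hq
    · rw [updatePairs, updatePairs_of_not_mem, updatePairs_of_not_mem]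
      · simp [update_of_ne hab]
      · exact fun q hq => ⟨(ne_of_mem_of_not_mem (hvars q hq).1 hb₁).symm,
          (ne_of_mem_of_not_mem (hvars q hq).2 hb₂).symm⟩
      · exact fun q hq => ⟨(ne_of_mem_of_not_mem (hvars q hq).1 ha₁).symm,
          (ne_of_mem_of_not_mem (hvars q hq).2 ha₂).symm⟩
    · exact ih hnd _ hq

namespace Model

lemma sat_exChain_of_sat_updatePairs (M : Model) (w : M.W) (θ : Formula)
    {l : List ((ℕ × ℕ) × (M.D × M.D))} (hl : ∀ q ∈ l, q.2.1 ∈ M.dom w ∧ q.2.2 ∈ M.dom w)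
    {σ : ℕ → M.D} (h : M.sat w (updatePairs σ l) θ) : M.sat w σ (exChain (l.map Prod.fst) θ) := by
  induction l generalizing σ with
  | nil => exact h
  | cons q l ih =>
    obtain ⟨⟨a, b⟩, d, e⟩ := q
    obtain ⟨hd, he⟩ := hl _ List.mem_cons_self
    exact ⟨d, hd, e, he, ih (fun q hq => hl q (List.mem_cons_of_mem _ hq)) h⟩

lemma exists_assignment_exChain {N : Model} {u : N.W} {ys : List (ℕ × ℕ)}
    (hnd : (ys.map Prod.fst ++ ys.map Prod.snd).Nodup) {vals : List (N.D × N.D)}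
    (hlen : ys.length = vals.length) (hvals : ∀ q ∈ vals, q.1 ∈ N.dom u ∧ q.2 ∈ N.dom u)
    (σ : ℕ → N.D) :
    ∃ σ' : ℕ → N.D, (∀ v ∉ ys.map Prod.fst ++ ys.map Prod.snd, σ' v = σ v) ∧
      (∀ q ∈ vals, ∃ p ∈ ys, σ' p.1 = q.1 ∧ σ' p.2 = q.2) ∧
      ∀ θ, N.sat u σ' θ → N.sat u σ (exChain ys θ) := by
  have hfst : (ys.zip vals).map Prod.fst = ys := List.map_fst_zip hlen.le
  have hsnd : (ys.zip vals).map Prod.snd = vals := List.map_snd_zip hlen.ge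
  have hys {q} (hq : q ∈ ys.zip vals) : q.1 ∈ ys := hfst ▸ List.mem_map_of_mem hq
  refine ⟨updatePairs σ (ys.zip vals), fun v hv => updatePairs_of_not_mem (fun q hq => ?_) σ,
    fun q hq => ?_, fun θ h => ?_⟩
  · simp only [List.mem_append, List.mem_map, not_or, not_exists, not_and] at hv
    exact ⟨fun h => hv.1 _ (hys hq) h.symm, fun h => hv.2 _ (hys hq) h.symm⟩
  · obtain ⟨q', hq', rfl⟩ := List.mem_map.mp (hsnd ▸ hq)
    exact ⟨q'.1, hys hq', updatePairs_of_mem (by rwa [hfst]) σ hq'⟩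
  · rw [← hfst]
    exact sat_exChain_of_sat_updatePairs N u θ
      (fun q hq => hvals q.2 (hsnd ▸ List.mem_map_of_mem hq)) h

section types

variable (M : Model) (w : M.W) (σ : ℕ → M.D) (IF : Finset (ℕ × Formula))

open Classical in
noncomputable def typeOf (d : M.D) : Finset (ℕ × Formula) :=
  IF.filter fun q => M.sat w (update σ q.1 d) q.2

lemma mem_typeOf {d : M.D} {q : ℕ × Formula} :
    q ∈ M.typeOf w σ IF d ↔ q ∈ IF ∧ M.sat w (update σ q.1 d) q.2 := by
  classical
  exact Finset.mem_filter

lemma exists_typeReps : ∃ R : Finset M.D, (∀ c ∈ R, c ∈ M.dom w) ∧ R.card ≤ 2 ^ IF.card ∧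
    ∀ d ∈ M.dom w, ∃ c ∈ R, M.typeOf w σ IF c = M.typeOf w σ IF d := by
  classical
  let realized := IF.powerset.filter fun T => ∃ d ∈ M.dom w, M.typeOf w σ IF d = T
  have hrep (T : realized) := (Finset.mem_filter.mp T.2).2
  refine ⟨realized.attach.image fun T => (hrep T).choose, ?_, ?_, fun d hd => ?_⟩
  · simp only [Finset.mem_image]
    rintro _ ⟨T, -, rfl⟩
    exact (hrep T).choose_spec.1
  · exact Finset.card_image_le.trans <| (Finset.card_attach).le.trans <|
      (Finset.card_filter_le _ _).trans (Finset.card_powerset IF).le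
  · have hT : M.typeOf w σ IF d ∈ realized :=
      Finset.mem_filter.mpr ⟨Finset.mem_powerset.mpr (Finset.filter_subset _ _), d, hd, rfl⟩
    exact ⟨_, Finset.mem_image_of_mem _ (Finset.mem_attach _ ⟨_, hT⟩), (hrep ⟨_, hT⟩).choose_spec.2⟩

end types

section twins

variable (M : Model) (w : M.W) (σ : ℕ → M.D) (IF : Finset (ℕ × Formula))

def TwinPair (p : (M.D × Fin 3) × (M.D × Fin 3)) : Prop :=
  p.1.1 ∈ M.dom w ∧ p.2.1 ∈ M.dom w ∧ M.typeOf w σ IF p.1.1 = M.typeOf w σ IF p.2.1 ∧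
    p.1.2 ≠ 0 ∧ p.2.2 ≠ 0

open Classical in
noncomputable def twinSwap (i : Option {p // M.TwinPair w σ IF p}) : Equiv.Perm (M.D × Fin 3) :=
  i.elim 1 fun p => Equiv.swap p.1.1 p.1.2

noncomputable abbrev witnessModel : Model :=
  (M.copies (Fin 3)).rootExt w (M.twinSwap w σ IF)

variable {M w σ IF}

lemma twinSwap_apply_of_snd_eq_zero (i : Option {p // M.TwinPair w σ IF p}) {d : M.D × Fin 3}
    (hd : d.2 = 0) : M.twinSwap w σ IF i d = d := by
  classical
  rcases i with _ | ⟨p, -, -, -, hp₁, hp₂⟩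
  · rfl
  · exact Equiv.swap_apply_of_ne_of_ne (fun h => hp₁ (h ▸ hd)) (fun h => hp₂ (h ▸ hd))

lemma typeOf_twinSwap (i : Option {p // M.TwinPair w σ IF p}) (d : M.D × Fin 3) :
    M.typeOf w σ IF (M.twinSwap w σ IF i d).1 = M.typeOf w σ IF d.1 := by
  classical
  rcases i with _ | ⟨p, -, -, hp, -, -⟩
  · rfl
  · simp only [twinSwap, Option.elim_some, Equiv.swap_apply_def]
    split_ifs <;> subst_vars <;> simp [hp]

lemma mapsTo_twinSwap (i : Option {p // M.TwinPair w σ IF p}) :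
    MapsTo (M.twinSwap w σ IF i) (Prod.fst ⁻¹' M.dom w) (Prod.fst ⁻¹' M.dom w) := by
  classical
  rcases i with _ | ⟨p, hp₁, hp₂, -, -, -⟩
  · exact mapsTo_id _
  · intro d hd
    simp only [twinSwap, Option.elim_some, Equiv.swap_apply_def]
    split_ifs <;> assumption

lemma Increasing.witnessModel (hM : M.Increasing) : (M.witnessModel w σ IF).Increasing :=
  have : Countable M.D := hM.2.2.2.1
  (hM.copies (Fin 3)).rootExt w _ mapsTo_twinSwap

lemma sat_twinSwap_of_mem {z : ℕ} {β : Formula} (hβ : (z, β) ∈ IF) {τ : ℕ → M.D × Fin 3}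
    (hτ : ∀ v ∈ β.fv, v ≠ z → τ v = (σ v, 0)) (i : Option {p // M.TwinPair w σ IF p})
    (h : (M.copies (Fin 3)).sat w τ β) :
    (M.copies (Fin 3)).sat w (M.twinSwap w σ IF i ∘ τ) β := by
  have hsat_iff : ∀ τ' : ℕ → M.D × Fin 3, (∀ v ∈ β.fv, v ≠ z → (τ' v).1 = σ v) →
      ((M.copies (Fin 3)).sat w τ' β ↔ (z, β) ∈ M.typeOf w σ IF (τ' z).1) := by
    intro τ' hτ'
    rw [sat_copies, mem_typeOf, and_iff_right hβ]
    refine M.sat_congr fun v hv => ?_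
    by_cases hvz : v = z
    · simp [hvz]
    · simp [hvz, hτ' v hv hvz]
  rw [hsat_iff τ fun v hv hvz => by rw [hτ v hv hvz]] at h
  rwa [hsat_iff _ fun v hv hvz => by simp [hτ v hv hvz, twinSwap_apply_of_snd_eq_zero], comp_apply,
    typeOf_twinSwap]

lemma sat_twinSwap_of_scoped {z : ℕ} {b : Formula} (hIF : ∀ β ∈ b.comps, (z, β) ∈ IF)
    {ρ : ℕ → M.D × Fin 3} (hρ : ∀ v ∈ b.vars, ρ v = (σ v, 0)) (ζ : M.D × Fin 3)
    (i : Option {p // M.TwinPair w σ IF p}) (β : Formula) (hβ : β ∈ b.comps)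
    (h : (M.copies (Fin 3)).sat w (update ρ z ζ) β) :
    (M.copies (Fin 3)).sat w (M.twinSwap w σ IF i ∘ update ρ z ζ) β :=
  sat_twinSwap_of_mem (hIF β hβ) (fun v hv hvz => by
    rw [update_of_ne hvz]
    exact hρ v (Formula.vars_subset_of_mem_comps hβ (Finset.mem_union_left _ hv))) i h

lemma sat_copies_update {z : ℕ} {b : Formula} {ρ : ℕ → M.D × Fin 3}
    (hρ : ∀ v ∈ b.vars, ρ v = (σ v, 0)) {ζ : M.D × Fin 3} (h : M.sat w (update σ z ζ.1) b) :
    (M.copies (Fin 3)).sat w (update ρ z ζ) b := by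
  rw [sat_copies]
  refine (M.sat_congr fun v hv => ?_).mpr h
  by_cases hvz : v = z
  · simp [hvz]
  · simp [hvz, hρ v (Finset.mem_union_left _ hv)]

lemma sat_witnessModel_of_quantABBABE {γ : Formula} (hγ : QuantABBABE γ)
    (hIF : γ.scopedComps ⊆ IF) (h : M.sat w σ γ) :
    (M.witnessModel w σ IF).sat none (fun v => (σ v, 0)) γ := by
  rcases hγ with hγ | ⟨z, b, rfl | rfl, hb⟩
  · have hfix (i) : M.twinSwap w σ IF i ∘ (fun v => (σ v, 0)) = fun v => (σ v, 0) :=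
      funext fun v => twinSwap_apply_of_snd_eq_zero i rfl
    exact sat_rootExt_none_of_abbabe mapsTo_twinSwap ⟨none, rfl⟩ hγ
      (fun i β _ hβ => by rwa [hfix i]) ((sat_copies ..).mpr h)
  · intro ζ hζ
    exact sat_rootExt_none_of_abbabe mapsTo_twinSwap ⟨none, rfl⟩ hb
      (sat_twinSwap_of_scoped (fun β hβ => hIF (Formula.mem_scopedComps_all hβ))
        (fun _ _ => rfl) ζ)
      (sat_copies_update (fun _ _ => rfl) (h ζ.1 hζ))
  · obtain ⟨d, hd, h⟩ := h
    exact ⟨(d, 0), hd, sat_rootExt_none_of_abbabe mapsTo_twinSwap ⟨none, rfl⟩ hb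
      (sat_twinSwap_of_scoped (fun β hβ => hIF (Formula.mem_scopedComps_ex hβ))
        (fun _ _ => rfl) (d, 0))
      (sat_copies_update (ζ := (d, 0)) (fun _ _ => rfl) h)⟩

lemma sat_witnessModel_mkWitDisj {R : Finset M.D} (hRdom : ∀ c ∈ R, c ∈ M.dom w)
    (hRrep : ∀ d ∈ M.dom w, ∃ c ∈ R, M.typeOf w σ IF c = M.typeOf w σ IF d)
    {y : ℕ} {ψ : Formula} {ys : List (ℕ × ℕ)} {τ : ℕ → M.D × Fin 3} {ζ : M.D × Fin 3}
    (hys : ∀ c ∈ R, ∃ p ∈ ys, τ p.1 = (c, 1) ∧ τ p.2 = (c, 2))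
    (hbv : ∀ p ∈ ys, p.1 ∉ ψ.bv ∧ p.2 ∉ ψ.bv)
    (hτ : ∀ v ∈ ψ.fv, v ≠ y → τ v = ζ ∨ (τ v).2 = 0)
    (h : (M.copies (Fin 3)).sat w τ (.ex y (.dia ψ))) :
    (M.witnessModel w σ IF).sat none τ (mkWitDisj y ψ ys) := by
  classical
  obtain ⟨ε, hε, v, hv, hψ⟩ := h
  obtain ⟨c, hcR, hc⟩ := hRrep ε.1 hε
  obtain ⟨p, hp, hp₁, hp₂⟩ := hys c hcR
  obtain ⟨k, hk, hkζ⟩ : ∃ k : Fin 3, k ≠ 0 ∧ (ε.1, k) ≠ ζ := by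
    by_cases h₁ : (ε.1, (1 : Fin 3)) = ζ
    · exact ⟨2, by decide, fun h₂ => absurd (h₂.trans h₁.symm) (by simp)⟩
    · exact ⟨1, by decide, h₁⟩
  -- the copy `(ε.1, k)` of the witness trades places with the twin `(c, j)` named by `yv`
  have hswapped (yv : ℕ) (hyv : yv ∉ ψ.bv) (j : Fin 3) (hj : j ≠ 0) (hτyv : τ yv = (c, j))
      (hjζ : (c, j) ≠ ζ) : (M.witnessModel w σ IF).sat none τ (.dia (ψ.subst y yv)) := by
    let i : Option {p // M.TwinPair w σ IF p} :=
      some ⟨((c, j), (ε.1, k)), hRdom c hcR, hε, hc, hj, hk⟩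
    have hswap : M.twinSwap w σ IF i = Equiv.swap (c, j) (ε.1, k) := rfl
    refine (sat_rootExt_none_dia (M.copies (Fin 3)) w _ _ τ).mpr ⟨i, v, hv, ?_⟩
    rw [sat_subst _ hyv, comp_apply, hτyv, hswap, Equiv.swap_apply_left, sat_copies]
    rw [sat_copies] at hψ
    refine (M.sat_congr fun u hu => ?_).mp hψ
    by_cases huy : u = y
    · simp [huy]
    · simp only [comp_apply, update_of_ne huy]
      rcases hτ u hu huy with h | h
      · rw [h, Equiv.swap_apply_of_ne_of_ne (Ne.symm hjζ) (Ne.symm hkζ)]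
      · rw [Equiv.swap_apply_of_ne_of_ne (fun h' => hj (by rwa [h'] at h))
          (fun h' => hk (by rwa [h'] at h))]
  rw [mkWitDisj, sat_bigOr]
  refine ⟨_, List.mem_map_of_mem hp, ?_⟩
  by_cases h₁ : (c, (1 : Fin 3)) = ζ
  · exact .inr (hswapped p.2 (hbv p hp).2 2 (by decide) hp₂
      fun h₂ => absurd (h₂.trans h₁.symm) (by simp))
  · exact .inl (hswapped p.1 (hbv p hp).1 1 (by decide) hp₁ h₁)

lemma sat_witnessModel_all_replComp {x y : ℕ} {φ ψ : Formula} (hφ : ABBABE φ)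
    (hcomp : .ex y (.dia ψ) ∈ φ.comps) (hIF : (Formula.all x φ).scopedComps ⊆ IF)
    {R : Finset M.D} (hRdom : ∀ c ∈ R, c ∈ M.dom w)
    (hRrep : ∀ d ∈ M.dom w, ∃ c ∈ R, M.typeOf w σ IF c = M.typeOf w σ IF d)
    {ys : List (ℕ × ℕ)} {ρ : ℕ → M.D × Fin 3}
    (hρ : ∀ v ∈ (Formula.all x φ).vars, ρ v = (σ v, 0))
    (hys : ∀ c ∈ R, ∃ p ∈ ys, ρ p.1 = (c, 1) ∧ ρ p.2 = (c, 2))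
    (hfresh : ∀ p ∈ ys, p.1 ∉ (Formula.all x φ).vars ∧ p.2 ∉ (Formula.all x φ).vars)
    (h : M.sat w σ (.all x φ)) :
    (M.witnessModel w σ IF).sat none ρ
      (.all x (replComp (.ex y (.dia ψ)) (mkWitDisj y ψ ys) φ)) := by
  have hψ : ψ.vars ⊆ (Formula.all x φ).vars :=
    calc ψ.vars ⊆ (Formula.ex y (.dia ψ)).vars := by
          rw [Formula.vars_ex]; exact Finset.subset_insert _ _
      _ ⊆ φ.vars := Formula.vars_subset_of_mem_comps hcomp
      _ ⊆ (Formula.all x φ).vars := by rw [Formula.vars_all]; exact Finset.subset_insert _ _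
  have hx : x ∈ (Formula.all x φ).vars := by rw [Formula.vars_all]; exact Finset.mem_insert_self _ _
  have hφρ : ∀ v ∈ φ.vars, ρ v = (σ v, 0) := fun v hv =>
    hρ v (by rw [Formula.vars_all]; exact Finset.mem_insert_of_mem hv)
  intro ζ hζ
  refine sat_rootExt_none_replComp mapsTo_twinSwap ⟨none, rfl⟩
    (fun ht => sat_witnessModel_mkWitDisj hRdom hRrep (ζ := ζ) (fun c hc => ?_) (fun p hp => ?_)
      (fun v hv hvy => ?_) ht) hφ
    (sat_twinSwap_of_scoped (fun β hβ => hIF (Formula.mem_scopedComps_all hβ)) hφρ ζ)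
    (sat_copies_update hφρ (h ζ.1 hζ))
  · obtain ⟨p, hp, hp₁, hp₂⟩ := hys c hc
    have hpx₁ : p.1 ≠ x := fun h => (hfresh p hp).1 (h ▸ hx)
    have hpx₂ : p.2 ≠ x := fun h => (hfresh p hp).2 (h ▸ hx)
    exact ⟨p, hp, by rwa [update_of_ne hpx₁], by rwa [update_of_ne hpx₂]⟩
  · exact ⟨fun h => (hfresh p hp).1 (hψ (Finset.mem_union_right _ h)),
      fun h => (hfresh p hp).2 (hψ (Finset.mem_union_right _ h))⟩
  · by_cases hvx : v = x
    · exact .inl (by rw [hvx, update_self])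
    · exact .inr (by rw [update_of_ne hvx, hρ v (hψ (Finset.mem_union_left _ hv))])

end twins

end Model

theorem bounded_witnesses_general (Γ : Finset Formula) (x y : ℕ) (φ ψ : Formula)
    (hsub : ∀ γ ∈ insert (Formula.all x φ) Γ, IsSubABBABE γ)
    (hcomp : Formula.ex y (.dia ψ) ∈ φ.comps)
    (hsat : SatSet (insert (Formula.all x φ) Γ)) :
    ∃ l ≤ 2 ^ ((insert (Formula.all x φ) Γ).sum Formula.size),
      ∀ ys : List (ℕ × ℕ), ys.length = l →
        (ys.map Prod.fst ++ ys.map Prod.snd).Nodup →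
        (∀ v ∈ ys.map Prod.fst ++ ys.map Prod.snd,
          ∀ γ ∈ insert (Formula.all x φ) Γ, v ∉ γ.fv ∪ γ.bv) →
        SatSet (insert
          (exChain ys (Formula.all x (replComp (.ex y (.dia ψ)) (mkWitDisj y ψ ys) φ)))
          Γ) := by
  obtain ⟨M, hM, w, σ, hrel, hΓ⟩ := hsat
  set IF := (insert (Formula.all x φ) Γ).biUnion Formula.scopedComps
  have hIF {γ} (hγ : γ ∈ insert (Formula.all x φ) Γ) : γ.scopedComps ⊆ IF :=
    Finset.subset_biUnion_of_mem _ hγ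
  have hφ := Finset.mem_insert_self (Formula.all x φ) Γ
  obtain ⟨R, hRdom, hRcard, hRrep⟩ := M.exists_typeReps w σ IF
  refine ⟨R.card, hRcard.trans (Nat.pow_le_pow_right two_pos
    (Formula.card_biUnion_scopedComps_le _)), fun ys hlen hnd hfresh => ?_⟩
  obtain ⟨ρ, hρσ, hρR, hρex⟩ := Model.exists_assignment_exChain (N := M.witnessModel w σ IF)
    (u := none) hnd (vals := R.toList.map fun c => ((c, 1), (c, 2))) (by simp [hlen])
    (by simp only [List.mem_map, Finset.mem_toList]
        rintro _ ⟨c, hc, rfl⟩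
        exact ⟨hRdom c hc, hRdom c hc⟩)
    fun v => (σ v, 0)
  refine ⟨M.witnessModel w σ IF, hM.witnessModel, none, fun v => (σ v, 0), fun v => hrel v, ?_⟩
  rw [Finset.forall_mem_insert]
  refine ⟨hρex _ ?_, fun γ hγ => ?_⟩
  · refine Model.sat_witnessModel_all_replComp ((hsub _ hφ).quantABBABE.abbabe_of_all hcomp)
      hcomp (hIF hφ) hRdom hRrep (fun v hv => hρσ v fun hv' => hfresh v hv' _ hφ hv)
      (fun c hc => ?_) (fun p hp => ?_) (hΓ _ hφ)
    · simpa using hρR _ (List.mem_map_of_mem (Finset.mem_toList.mpr hc))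
    · exact ⟨hfresh _ (List.mem_append_left _ (List.mem_map_of_mem hp)) _ hφ,
        hfresh _ (List.mem_append_right _ (List.mem_map_of_mem hp)) _ hφ⟩
  · have hγ' : γ ∈ insert (Formula.all x φ) Γ := Finset.mem_insert_of_mem hγ
    exact Model.sat_witnessModel_of_quantABBABE (hsub γ hγ').quantABBABE (hIF hγ') (hΓ γ hγ')

/-- the bounded-witness lemma.  Let
`Γ' = Γ ∪ {∀x φ}` be a clean finite set of formulas, each a subformula of the
`ABBABE` fragment, where `∃y◇ψ` is a component of `φ`.  If `⋀Γ ∧ ∀x φ[∃y◇ψ]` is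
satisfiable in an increasing domain model, then there is `l ≤ 2^{|Γ'|}` such
that `⋀Γ ∧ ∃y1∃y1'…∃yl∃yl' ∀x φ[ȳ◇ψ]` is satisfiable in an increasing domain
model, where `y1,y1',…,yl,yl'` are fresh variables and `φ[ȳ◇ψ]` is `φ` with the
component `∃y◇ψ` replaced by `⋁_{i≤l}(◇ψ[yi/y] ∨ ◇ψ[yi'/y])`. -/
theorem bounded_witnesses (Γ : Finset Formula) (x y : ℕ) (φ ψ : Formula)
    (hclean : CleanSet (insert (Formula.all x φ) Γ))
    (hsub : ∀ γ ∈ insert (Formula.all x φ) Γ, IsSubABBABE γ)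
    (hcomp : Formula.ex y (.dia ψ) ∈ φ.comps)
    (hsat : SatSet (insert (Formula.all x φ) Γ)) :
    ∃ l ≤ 2 ^ ((insert (Formula.all x φ) Γ).sum Formula.size),
      ∀ ys : List (ℕ × ℕ), ys.length = l →
        (ys.map Prod.fst ++ ys.map Prod.snd).Nodup →
        (∀ v ∈ ys.map Prod.fst ++ ys.map Prod.snd,
          ∀ γ ∈ insert (Formula.all x φ) Γ, v ∉ γ.fv ∪ γ.bv) →
        SatSet (insert
          (exChain ys (Formula.all x (replComp (.ex y (.dia ψ)) (mkWitDisj y ψ ys) φ)))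
          Γ) :=
  bounded_witnesses_general Γ x y φ ψ hsub hcomp hsat
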